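/- Let P(X,Y) = X³Y² + X²Y³ + 1 − 5XY + 5X²Y² ∈ ℂ[X,Y], φ = (1+√5)/2 and φ̃ = (1−√5)/2. Then the points q₁ = (−φ,−φ) and q₂ = (−φ̃,−φ̃) are singular points of the curve P = 0: P(−φ,−φ) = 0, ∂P/∂X(−φ,−φ) = 0, ∂P/∂Y(−φ,−φ) = 0, and likewise P(−φ̃,−φ̃) = ∂P/∂X(−φ̃,−φ̃) = ∂P/∂Y(−φ̃,−φ̃) = 0. -/

import Mathlib

open MvPolynomial

/-- P(X,Y) = X³Y² + X²Y³ + 1 − 5XY + 5X²Y², with X = X 0 and Y = X 1. -/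
noncomputable def Pcon : MvPolynomial (Fin 2) ℂ :=
  X 0 ^ 3 * X 1 ^ 2 + X 0 ^ 2 * X 1 ^ 3 + 1 - 5 * X 0 * X 1 + 5 * X 0 ^ 2 * X 1 ^ 2

/-- The golden ratio φ = (1+√5)/2, as a complex number. -/
noncomputable def goldφ : ℂ := (((1 + Real.sqrt 5) / 2 : ℝ) : ℂ)

/-- The conjugate golden ratio φ̃ = (1−√5)/2, as a complex number. -/
noncomputable def goldφ' : ℂ := (((1 - Real.sqrt 5) / 2 : ℝ) : ℂ)

/-!
On the diagonal `X = Y = -t` the polynomial becomes `(1 - 2t)(t² - t - 1)²` and both partial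
derivatives become `5t(t - 1)(t² - t - 1)`, so every root of `t² = t + 1`, i.e. `φ` and `φ̃`,
gives a singular point `(-t, -t)`.
-/

lemma pderiv_ofNat {σ R : Type*} [CommSemiring R] (i : σ) (n : ℕ) [n.AtLeastTwo] :
    pderiv i (no_index (OfNat.ofNat n : MvPolynomial σ R)) = 0 := by
  rw [← map_ofNat C n, pderiv_C]

lemma pderiv_zero_Pcon :
    pderiv 0 Pcon = 3 * X 0 ^ 2 * X 1 ^ 2 + 2 * X 0 * X 1 ^ 3 - 5 * X 1 + 10 * X 0 * X 1 ^ 2 := by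
  simp only [Pcon, map_add, map_sub, Derivation.map_one_eq_zero, Derivation.leibniz,
    Derivation.leibniz_pow, pderiv_X_self,
    pderiv_X_of_ne (show (1 : Fin 2) ≠ 0 by decide), pderiv_ofNat, smul_eq_mul]
  ring

lemma pderiv_one_Pcon :
    pderiv 1 Pcon = 2 * X 0 ^ 3 * X 1 + 3 * X 0 ^ 2 * X 1 ^ 2 - 5 * X 0 + 10 * X 0 ^ 2 * X 1 := by
  simp only [Pcon, map_add, map_sub, Derivation.map_one_eq_zero, Derivation.leibniz,
    Derivation.leibniz_pow, pderiv_X_self,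
    pderiv_X_of_ne (show (0 : Fin 2) ≠ 1 by decide), pderiv_ofNat, smul_eq_mul]
  ring

lemma eval_neg_diag_Pcon (t : ℂ) :
    eval (fun _ => -t) Pcon = (1 - 2 * t) * (t ^ 2 - t - 1) ^ 2 := by
  simp only [Pcon, map_add, map_sub, map_mul, map_pow, map_one, map_ofNat, eval_X]
  ring

lemma eval_neg_diag_pderiv_Pcon (i : Fin 2) (t : ℂ) :
    eval (fun _ => -t) (pderiv i Pcon) = 5 * t * (t - 1) * (t ^ 2 - t - 1) := by
  fin_cases i <;>
  · simp only [Fin.zero_eta, Fin.mk_one, pderiv_zero_Pcon, pderiv_one_Pcon, map_add, map_sub,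
      map_mul, map_pow, map_ofNat, eval_X]
    ring

lemma isSingular_neg_diag_Pcon {t : ℂ} (ht : t ^ 2 = t + 1) :
    eval (fun _ => -t) Pcon = 0 ∧
    eval (fun _ => -t) (pderiv 0 Pcon) = 0 ∧
    eval (fun _ => -t) (pderiv 1 Pcon) = 0 := by
  have hquad : t ^ 2 - t - 1 = 0 := by linear_combination ht
  simp only [eval_neg_diag_Pcon, eval_neg_diag_pderiv_Pcon, hquad]
  norm_num

lemma goldφ_sq : goldφ ^ 2 = goldφ + 1 := by
  unfold goldφ
  exact_mod_cast congrArg ((↑) : ℝ → ℂ) Real.goldenRatio_sq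

lemma goldφ'_sq : goldφ' ^ 2 = goldφ' + 1 := by
  unfold goldφ'
  exact_mod_cast congrArg ((↑) : ℝ → ℂ) Real.goldenConj_sq

theorem stmt_8 :
    eval (fun _ : Fin 2 => -goldφ) Pcon = 0 ∧
    eval (fun _ : Fin 2 => -goldφ) (pderiv 0 Pcon) = 0 ∧
    eval (fun _ : Fin 2 => -goldφ) (pderiv 1 Pcon) = 0 ∧
    eval (fun _ : Fin 2 => -goldφ') Pcon = 0 ∧
    eval (fun _ : Fin 2 => -goldφ') (pderiv 0 Pcon) = 0 ∧
    eval (fun _ : Fin 2 => -goldφ') (pderiv 1 Pcon) = 0 := by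
  obtain ⟨hφ, hφ₀, hφ₁⟩ := isSingular_neg_diag_Pcon goldφ_sq
  exact ⟨hφ, hφ₀, hφ₁, isSingular_neg_diag_Pcon goldφ'_sq⟩
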